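/- arXiv:2604.10901 — 2 statements merged into one kernel-verified Lean document; each statement's English description precedes it below -/
import Mathlib

section
/- Let r_i denote the i-th smallest prime greater than 3. For every integer t ≥ 18, the product r₇·r₈·⋯·r_t is strictly greater than (3·(t+3)·2^(t-3) - 1)³. -/
/-- `r i` is the `i`-th smallest prime greater than 3 (so `r 1 = 5`, `r 2 = 7`, ...). -/
noncomputable def r (i : ℕ) : ℕ := Nat.nth (fun q => Nat.Prime q ∧ 3 < q) (i - 1)

/-! Induction on `t` from `t = 18`, where both sides are computed. Passing from `t` to `t + 1`
multiplies the left-hand side by less than `4 ^ 3 = 64`, while the right-hand side gains the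
factor `r (t + 1) ≥ r 19 = 73`. -/

lemma setOf_prime_and_three_lt_infinite : {q | Nat.Prime q ∧ 3 < q}.Infinite :=
  (Nat.infinite_setOfPred_prime.sdiff (Set.finite_Iic 3)).mono fun _ hq => ⟨hq.1, not_le.mp hq.2⟩

lemma r_eq_of_count {i n : ℕ} (hcount : Nat.count (fun q => Nat.Prime q ∧ 3 < q) n = i - 1)
    (hn : Nat.Prime n ∧ 3 < n) : r i = n := by
  rw [r, ← hcount, Nat.nth_count hn]

lemma seventy_three_le_r {i : ℕ} (hi : 19 ≤ i) : 73 ≤ r i := by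
  rw [← r_eq_of_count (i := 19) (n := 73) (by decide) (by decide)]
  exact Nat.nth_monotone setOf_prime_and_three_lt_infinite (by omega)

lemma prod_r_Icc_seven_eighteen : ∏ i ∈ Finset.Icc 7 18, r i = 57521511525285752531 := by
  rw [← Finset.Ico_add_one_right_eq_Icc, Finset.prod_Ico_eq_prod_range]
  norm_num only [Finset.prod_range_succ, Finset.prod_range_zero]
  rw [r_eq_of_count (i := 7) (n := 23) (by decide) (by decide),
    r_eq_of_count (i := 8) (n := 29) (by decide) (by decide),
    r_eq_of_count (i := 9) (n := 31) (by decide) (by decide),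
    r_eq_of_count (i := 10) (n := 37) (by decide) (by decide),
    r_eq_of_count (i := 11) (n := 41) (by decide) (by decide),
    r_eq_of_count (i := 12) (n := 43) (by decide) (by decide),
    r_eq_of_count (i := 13) (n := 47) (by decide) (by decide),
    r_eq_of_count (i := 14) (n := 53) (by decide) (by decide),
    r_eq_of_count (i := 15) (n := 59) (by decide) (by decide),
    r_eq_of_count (i := 16) (n := 61) (by decide) (by decide),
    r_eq_of_count (i := 17) (n := 67) (by decide) (by decide),
    r_eq_of_count (i := 18) (n := 71) (by decide) (by decide)]
  norm_num

lemma cube_step_lt {u a : ℕ} (hu : 2 ≤ u) (ha : 1 ≤ a) :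
    (3 * ((u + 1) * (a * 2)) - 1) ^ 3 < 73 * (3 * (u * a) - 1) ^ 3 := by
  have hua : 2 * a ≤ u * a := Nat.mul_le_mul_right a hu
  have hexpand : 3 * ((u + 1) * (a * 2)) = 6 * (u * a) + 6 * a := by ring
  have hlt : 3 * ((u + 1) * (a * 2)) - 1 < 4 * (3 * (u * a) - 1) := by omega
  calc (3 * ((u + 1) * (a * 2)) - 1) ^ 3
      < (4 * (3 * (u * a) - 1)) ^ 3 := Nat.pow_lt_pow_left hlt (by norm_num)
    _ = 64 * (3 * (u * a) - 1) ^ 3 := by ring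
    _ ≤ 73 * (3 * (u * a) - 1) ^ 3 := by gcongr; norm_num

theorem stmt_8 (t : ℕ) (ht : 18 ≤ t) :
    (3 * ((t + 3) * 2 ^ (t - 3)) - 1) ^ 3 < ∏ i ∈ Finset.Icc 7 t, r i := by
  induction t, ht using Nat.le_induction with
  | base => rw [prod_r_Icc_seven_eighteen]; norm_num
  | succ t ht ih =>
    rw [Finset.prod_Icc_succ_top (by omega), show t + 1 - 3 = t - 3 + 1 by omega, pow_succ,
      show t + 1 + 3 = t + 3 + 1 by omega]
    calc (3 * ((t + 3 + 1) * (2 ^ (t - 3) * 2)) - 1) ^ 3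
        < 73 * (3 * ((t + 3) * 2 ^ (t - 3)) - 1) ^ 3 := cube_step_lt (by omega) Nat.one_le_two_pow
      _ < 73 * ∏ i ∈ Finset.Icc 7 t, r i := by gcongr
      _ ≤ (∏ i ∈ Finset.Icc 7 t, r i) * r (t + 1) := by
        rw [mul_comm]; gcongr; exact seventy_three_le_r (by omega)
end

section
/- Let K be a diagonal ternary ℤ-lattice that is 2-stable and 3-stable, u an integer with gcd(u,6)=1, and l any integer. Then there exists ν ∈ {0,1,2,3,4} such that u(12n+ν)+l is represented by K over ℤ₂ and over ℤ₃ for every integer n. -/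
open scoped BigOperators

/-- The bilinear form of the diagonal ternary lattice `⟨a 0, a 1, a 2⟩` over `ℤ_p`. -/
noncomputable def diagB (p : ℕ) [Fact (Nat.Prime p)] (a : Fin 3 → ℤ) (x y : Fin 3 → ℤ_[p]) : ℤ_[p] :=
  ∑ i, (a i : ℤ_[p]) * x i * y i

/-- `N` is represented by the diagonal ternary lattice `⟨a 0, a 1, a 2⟩` over `ℤ_p`. -/
def diagRep (p : ℕ) [Fact (Nat.Prime p)] (a : Fin 3 → ℤ) (N : ℤ) : Prop :=
  ∃ x : Fin 3 → ℤ_[p], (∑ i, (a i : ℤ_[p]) * (x i) ^ 2) = (N : ℤ_[p])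

/-- `p`-stability of the diagonal ternary lattice `⟨a 0, a 1, a 2⟩` (for odd `p`):
either the hyperbolic plane `⟨1,-1⟩` is represented by `L_p`, or
`L_p ≅ ⟨1,-Δ_p⟩ ⊥ ⟨pε_p⟩` with `Δ_p` a non-square unit and `ε_p` a unit. -/
def IsPStable (p : ℕ) [Fact (Nat.Prime p)] (a : Fin 3 → ℤ) : Prop :=
  (∃ u v : Fin 3 → ℤ_[p],
      diagB p a u u = 1 ∧ diagB p a v v = -1 ∧ diagB p a u v = 0) ∨
  (∃ Δ ε : ℤ_[p]ˣ, ¬ IsSquare (Δ : ℤ_[p]) ∧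
    ∃ u v w : Fin 3 → ℤ_[p],
      diagB p a u u = 1 ∧ diagB p a v v = -(Δ : ℤ_[p]) ∧
      diagB p a w w = (p : ℤ_[p]) * (ε : ℤ_[p]) ∧
      diagB p a u v = 0 ∧ diagB p a u w = 0 ∧ diagB p a v w = 0 ∧
      IsUnit (Matrix.det (Matrix.of ![u, v, w])))

/-- 2-stability of the diagonal ternary lattice `⟨a 0, a 1, a 2⟩`:
`K₂` is unimodular, or `⟨1,3⟩ → K₂`, or `⟨1,7⟩ → K₂`. -/
def Is2Stable (a : Fin 3 → ℤ) : Prop :=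
  (IsUnit ((a 0 * a 1 * a 2 : ℤ) : ℤ_[2])) ∨
  (∃ u v : Fin 3 → ℤ_[2],
      diagB 2 a u u = 1 ∧ diagB 2 a v v = 3 ∧ diagB 2 a u v = 0) ∨
  (∃ u v : Fin 3 → ℤ_[2],
      diagB 2 a u u = 1 ∧ diagB 2 a v v = 7 ∧ diagB 2 a u v = 0)


/-! Over `ℤ₂` and `ℤ₃`, Hensel's lemma solves `c t² = M` as soon as `c` is a unit and `M ≡ c`
modulo `8`, resp. `3`. Hence a 3-stable lattice represents over `ℤ₃` every integer prime to `3`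
(through the hyperbolic plane, or through `x² - Δ y²` with `Δ ≡ 2 mod 3`), and a 2-stable
lattice represents over `ℤ₂` two whole residue classes mod `4`: those of `a₀` and `a₀ + a₁`
when `K₂` is unimodular, those of `1` and `d` when `⟨1, d⟩ → K₂`. Since `u` is invertible
mod `12`, it remains to pick `ν ≤ 4` in one of two given classes mod `4` and outside a given
class mod `3`. -/

namespace PadicInt

variable {p : ℕ} [Fact p.Prime]

open Polynomial in
theorem exists_mul_sq_eq_of_norm_sub_lt {c M : ℤ_[p]} (hc : IsUnit c)
    (h : ‖M - c‖ < ‖(2 : ℤ_[p])‖ ^ 2) : ∃ t : ℤ_[p], c * t ^ 2 = M := by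
  have hF : ‖(C c * X ^ 2 - C M).aeval (1 : ℤ_[p])‖ <
      ‖(C c * X ^ 2 - C M).derivative.aeval (1 : ℤ_[p])‖ ^ 2 := by
    simpa [norm_sub_rev, norm_mul, isUnit_iff.1 hc, one_add_one_eq_two] using h
  obtain ⟨t, ht, -⟩ := hensels_lemma hF
  exact ⟨t, by simpa [sub_eq_zero] using ht⟩

theorem toZMod_eq_toZMod_iff {x y : ℤ_[p]} : toZMod x = toZMod y ↔ ‖x - y‖ < 1 := by
  rw [← sub_eq_zero, ← map_sub, ← RingHom.mem_ker, ker_toZMod, IsLocalRing.mem_maximalIdeal,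
    mem_nonunits]

theorem isUnit_iff_toZMod_ne_zero {x : ℤ_[p]} : IsUnit x ↔ toZMod x ≠ 0 := by
  rw [Ne, ← RingHom.mem_ker, ker_toZMod, IsLocalRing.mem_maximalIdeal, mem_nonunits_iff,
    not_not]

theorem isUnit_two (hp : p ≠ 2) : IsUnit (2 : ℤ_[p]) := by
  rw [isUnit_iff, ← Nat.cast_ofNat, norm_natCast_eq_one_iff]
  exact (Nat.coprime_primes Fact.out Nat.prime_two).2 hp

theorem isUnit_intCast_two_iff {b : ℤ} : IsUnit (b : ℤ_[2]) ↔ Odd b := by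
  rw [isUnit_iff, norm_intCast_eq_one_iff]
  exact Int.isCoprime_two_right

theorem exists_mul_sq_eq_of_toZMod_eq (hp : p ≠ 2) {c M : ℤ_[p]} (hc : IsUnit c)
    (h : toZMod M = toZMod c) : ∃ t : ℤ_[p], c * t ^ 2 = M := by
  refine exists_mul_sq_eq_of_norm_sub_lt hc ?_
  rwa [isUnit_iff.1 (isUnit_two hp), one_pow, ← toZMod_eq_toZMod_iff]

theorem exists_mul_sq_eq_of_modEq_eight {b M : ℤ} (hb : Odd b) (h : M ≡ b [ZMOD 8]) :
    ∃ t : ℤ_[2], (b : ℤ_[2]) * t ^ 2 = M := by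
  refine exists_mul_sq_eq_of_norm_sub_lt (isUnit_intCast_two_iff.2 hb) ?_
  have h8 : ‖((M - b : ℤ) : ℤ_[2])‖ ≤ ((2 : ℕ) : ℝ) ^ (-(3 : ℕ) : ℤ) :=
    norm_int_le_pow_iff_dvd.2 (Int.ModEq.dvd h.symm)
  have h2 : ‖(2 : ℤ_[2])‖ = 2⁻¹ := by simpa using norm_p (p := 2)
  rw [h2]
  push_cast at h8
  calc _ ≤ (2 : ℝ) ^ (-(3 : ℕ) : ℤ) := h8
    _ < _ := by norm_num

theorem exists_mul_sq_add_mul_sq_eq {b c N : ℤ} (hb : Odd b) (hc : Odd c)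
    (hN : N ≡ b [ZMOD 4]) : ∃ x y : ℤ_[2], (b : ℤ_[2]) * x ^ 2 + c * y ^ 2 = N := by
  have h8 : N ≡ b [ZMOD 8] ∨ N - c * 2 ^ 2 ≡ b [ZMOD 8] := by
    obtain ⟨k, rfl⟩ := hc
    simp only [Int.ModEq] at hN ⊢
    omega
  rcases h8 with h | h
  · obtain ⟨x, hx⟩ := exists_mul_sq_eq_of_modEq_eight hb h
    exact ⟨x, 0, by simpa using hx⟩
  · obtain ⟨x, hx⟩ := exists_mul_sq_eq_of_modEq_eight hb h
    exact ⟨x, 2, by push_cast at hx; linear_combination hx⟩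

end PadicInt

section Representation

variable {p : ℕ} [Fact p.Prime] {a : Fin 3 → ℤ}

theorem diagRep_of_diagB_self_eq {N : ℤ} (x : Fin 3 → ℤ_[p]) (h : diagB p a x x = N) :
    diagRep p a N :=
  ⟨x, by simpa only [diagB, sq, mul_assoc] using h⟩

theorem diagB_add_smul_self (u v : Fin 3 → ℤ_[p]) (α β : ℤ_[p]) :
    diagB p a (α • u + β • v) (α • u + β • v) =
      α ^ 2 * diagB p a u u + 2 * α * β * diagB p a u v + β ^ 2 * diagB p a v v := by
  simp only [diagB, Fin.sum_univ_three, Pi.add_apply, Pi.smul_apply, smul_eq_mul]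
  ring

theorem diagRep_of_orthogonal {u v : Fin 3 → ℤ_[p]} (huv : diagB p a u v = 0) {N : ℤ}
    (α β : ℤ_[p]) (h : α ^ 2 * diagB p a u u + β ^ 2 * diagB p a v v = N) : diagRep p a N :=
  diagRep_of_diagB_self_eq (α • u + β • v) (by rw [diagB_add_smul_self, huv, ← h]; ring)

theorem diagRep_of_hyperbolic (hp : p ≠ 2)
    {u v : Fin 3 → ℤ_[p]} (hu : diagB p a u u = 1) (hv : diagB p a v v = -1)
    (huv : diagB p a u v = 0) (N : ℤ) : diagRep p a N := by
  -- `N = ((N + 1) / 2)² - ((N - 1) / 2)²`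
  obtain ⟨h, hh⟩ := (PadicInt.isUnit_two hp).exists_right_inv
  refine diagRep_of_orthogonal huv ((N + 1) * h) ((N - 1) * h) ?_
  rw [hu, hv]
  linear_combination (N : ℤ_[p]) * (2 * h + 1) * hh

end Representation

section TwoAdic

variable {a : Fin 3 → ℤ}

theorem diagRep_two_of_odd (ha0 : Odd (a 0)) (ha2 : Odd (a 2)) (y : ℤ) {N : ℤ}
    (hN : N - a 1 * y ^ 2 ≡ a 0 [ZMOD 4]) : diagRep 2 a N := by
  obtain ⟨x, z, h⟩ := PadicInt.exists_mul_sq_add_mul_sq_eq ha0 ha2 hN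
  refine ⟨![x, y, z], ?_⟩
  push_cast at h
  simp only [Fin.sum_univ_three, Matrix.cons_val_zero, Matrix.cons_val_one, Matrix.cons_val_two,
    Matrix.head_cons, Matrix.tail_cons]
  linear_combination h

theorem diagRep_two_of_orthogonal {u v : Fin 3 → ℤ_[2]} {d : ℤ} (hd : Odd d)
    (hu : diagB 2 a u u = 1) (hv : diagB 2 a v v = d) (huv : diagB 2 a u v = 0) {N : ℤ}
    (hN : N ≡ 1 [ZMOD 4] ∨ N ≡ d [ZMOD 4]) : diagRep 2 a N := by
  rcases hN with hN | hN
  · obtain ⟨x, y, h⟩ := PadicInt.exists_mul_sq_add_mul_sq_eq odd_one hd hN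
    exact diagRep_of_orthogonal huv x y (by rw [hu, hv, ← h]; push_cast; ring)
  · obtain ⟨x, y, h⟩ := PadicInt.exists_mul_sq_add_mul_sq_eq hd odd_one hN
    exact diagRep_of_orthogonal huv y x (by rw [hu, hv, ← h]; push_cast; ring)

theorem exists_classes_mod_four_of_is2Stable (h : Is2Stable a) :
    ∃ c₁ c₂ : ℤ, ¬ c₁ ≡ c₂ [ZMOD 4] ∧
      ∀ N : ℤ, N ≡ c₁ [ZMOD 4] ∨ N ≡ c₂ [ZMOD 4] → diagRep 2 a N := by
  rcases h with hunit | ⟨u, v, hu, hv, huv⟩ | ⟨u, v, hu, hv, huv⟩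
  · obtain ⟨h01, ha2⟩ := Int.odd_mul.1 (PadicInt.isUnit_intCast_two_iff.1 hunit)
    obtain ⟨ha0, ha1⟩ := Int.odd_mul.1 h01
    refine ⟨a 0, a 0 + a 1, ?_, ?_⟩
    · obtain ⟨k, hk⟩ := ha1
      simp only [Int.ModEq]
      omega
    · rintro N (hN | hN)
      · exact diagRep_two_of_odd ha0 ha2 0 (by simpa using hN)
      · exact diagRep_two_of_odd ha0 ha2 1 (by simpa using hN.sub_right (a 1))
  · exact ⟨1, 3, by decide, fun N hN =>
      diagRep_two_of_orthogonal (d := 3) (by decide) hu (by rw [hv]; norm_num) huv hN⟩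
  · exact ⟨1, 7, by decide, fun N hN =>
      diagRep_two_of_orthogonal (d := 7) (by decide) hu (by rw [hv]; norm_num) huv hN⟩

end TwoAdic

theorem diagRep_three_of_isPStable {a : Fin 3 → ℤ} (h : IsPStable 3 a) {N : ℤ}
    (hN : ¬ (3 : ℤ) ∣ N) : diagRep 3 a N := by
  rcases h with ⟨u, v, hu, hv, huv⟩ | ⟨Δ, -, hΔ, u, v, -, hu, hv, -, huv, -⟩
  · exact diagRep_of_hyperbolic (by decide) hu hv huv N
  have hunits : ∀ z : ZMod 3, z ≠ 0 → z = 1 ∨ z = 2 := by decide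
  have hN' : PadicInt.toZMod (N : ℤ_[3]) ≠ 0 := by
    rwa [map_intCast, Ne, ZMod.intCast_zmod_eq_zero_iff_dvd]
  -- a unit of `ℤ₃` that is `1` mod 3 is a square, so the non-square `Δ` is `2` mod 3
  have hΔ2 : PadicInt.toZMod (Δ : ℤ_[3]) = 2 := by
    refine (hunits _ (PadicInt.isUnit_iff_toZMod_ne_zero.1 Δ.isUnit)).resolve_left fun hΔ1 => ?_
    obtain ⟨t, ht⟩ := PadicInt.exists_mul_sq_eq_of_toZMod_eq (p := 3) (c := 1) (by decide)
      isUnit_one (by rw [hΔ1, map_one])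
    exact hΔ ⟨t, by rw [← ht]; ring⟩
  rcases hunits _ hN' with hN1 | hN2
  · obtain ⟨t, ht⟩ := PadicInt.exists_mul_sq_eq_of_toZMod_eq (p := 3) (c := 1) (by decide)
      isUnit_one (by rw [hN1, map_one])
    exact diagRep_of_orthogonal huv t 0 (by rw [hu, ← ht]; ring)
  · have h1Δ : PadicInt.toZMod (1 - (Δ : ℤ_[3])) = 2 := by
      rw [map_sub, map_one, hΔ2]; decide
    obtain ⟨t, ht⟩ := PadicInt.exists_mul_sq_eq_of_toZMod_eq (p := 3) (by decide)
      (PadicInt.isUnit_iff_toZMod_ne_zero.2 (by rw [h1Δ]; decide)) (by rw [hN2, h1Δ])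
    exact diagRep_of_orthogonal huv t t (by rw [hu, hv, ← ht]; ring)

theorem ZMod.exists_le_four_natCast (d₁ d₂ : ZMod 4) (hd : d₁ ≠ d₂) (e : ZMod 3) :
    ∃ ν : ℕ, ν ≤ 4 ∧ ((ν : ZMod 4) = d₁ ∨ (ν : ZMod 4) = d₂) ∧ (ν : ZMod 3) ≠ e := by
  obtain ⟨ν, hν⟩ : ∃ ν : Fin 5,
      (((ν : ℕ) : ZMod 4) = d₁ ∨ ((ν : ℕ) : ZMod 4) = d₂) ∧ ((ν : ℕ) : ZMod 3) ≠ e := by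
    revert d₁ d₂ e
    decide
  exact ⟨ν, Nat.le_of_lt_succ ν.isLt, hν⟩

theorem exists_le_four_forall_modEq (u l c₁ c₂ : ℤ) (hu : IsCoprime u 6)
    (hc : ¬ c₁ ≡ c₂ [ZMOD 4]) :
    ∃ ν : ℕ, ν ≤ 4 ∧ ∀ n : ℤ,
      (u * (12 * n + ν) + l ≡ c₁ [ZMOD 4] ∨ u * (12 * n + ν) + l ≡ c₂ [ZMOD 4]) ∧
        ¬ (3 : ℤ) ∣ u * (12 * n + ν) + l := by
  have hu4 : IsCoprime u (4 : ℕ) := by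
    simpa using (hu.of_isCoprime_of_dvd_right (by norm_num : (2 : ℤ) ∣ 6)).pow_right (n := 2)
  have hu3 : IsCoprime u (3 : ℕ) := hu.of_isCoprime_of_dvd_right (by norm_num)
  have hmod4 : ∀ x y : ℤ, x ≡ y [ZMOD 4] ↔ (x : ZMod 4) = y :=
    fun x y => (ZMod.intCast_eq_intCast_iff x y 4).symm
  have hdvd3 : ∀ x : ℤ, (3 : ℤ) ∣ x ↔ (x : ZMod 3) = 0 :=
    fun x => (ZMod.intCast_zmod_eq_zero_iff_dvd x 3).symm
  have hw4 := ZMod.coe_int_inv_mul_eq_one hu4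
  have hw3 := ZMod.coe_int_inv_mul_eq_one hu3
  set w4 := (u : ZMod 4)⁻¹
  set w3 := (u : ZMod 3)⁻¹
  have hd : w4 * (c₁ - l) ≠ w4 * (c₂ - l) := by
    intro h
    refine hc ((hmod4 _ _).2 ?_)
    linear_combination (u : ZMod 4) * h - (c₁ - c₂ : ZMod 4) * hw4
  obtain ⟨ν, hν, hν4, hν3⟩ := ZMod.exists_le_four_natCast _ _ hd (-(w3 * l))
  refine ⟨ν, hν, fun n => ⟨?_, ?_⟩⟩
  · have h12 : (12 : ZMod 4) = 0 := rfl
    simp only [hmod4]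
    push_cast
    rcases hν4 with h | h
    · left
      linear_combination (u : ZMod 4) * h + (u * n : ZMod 4) * h12 + ((c₁ : ZMod 4) - l) * hw4
    · right
      linear_combination (u : ZMod 4) * h + (u * n : ZMod 4) * h12 + ((c₂ : ZMod 4) - l) * hw4
  · have h12 : (12 : ZMod 3) = 0 := rfl
    rw [hdvd3]
    push_cast
    intro h
    exact hν3 (by linear_combination w3 * h - (w3 * u * n : ZMod 3) * h12 - (ν : ZMod 3) * hw3)

theorem stmt_14_general (a : Fin 3 → ℤ)
    (h2 : Is2Stable a) (h3 : IsPStable 3 a)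
    (u : ℤ) (hu : IsCoprime u 6) (l : ℤ) :
    ∃ ν : ℕ, ν ≤ 4 ∧ ∀ n : ℤ,
      diagRep 2 a (u * (12 * n + ν) + l) ∧ diagRep 3 a (u * (12 * n + ν) + l) := by
  obtain ⟨c₁, c₂, hc, hrep2⟩ := exists_classes_mod_four_of_is2Stable h2
  obtain ⟨ν, hν, hgood⟩ := exists_le_four_forall_modEq u l c₁ c₂ hu hc
  exact ⟨ν, hν, fun n =>
    ⟨hrep2 _ (hgood n).1, diagRep_three_of_isPStable h3 (hgood n).2⟩⟩

/-- for a 2-stable and 3-stable diagonal ternary lattice `K`,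
`u` coprime to 6 and any `l`, some class `u(12n+ν)+l`, `ν ∈ {0,...,4}`, is entirely
represented by `K` over `ℤ₂` and over `ℤ₃`. -/
theorem stmt_14 (a : Fin 3 → ℤ) (ha : ∀ i, 0 < a i)
    (h2 : Is2Stable a) (h3 : IsPStable 3 a)
    (u : ℤ) (hu : IsCoprime u 6) (l : ℤ) :
    ∃ ν : ℕ, ν ≤ 4 ∧ ∀ n : ℤ,
      diagRep 2 a (u * (12 * n + ν) + l) ∧ diagRep 3 a (u * (12 * n + ν) + l) :=
  stmt_14_general a h2 h3 u hu l
end
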